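/- arXiv:1107.4926 — 4 statements merged into one kernel-verified Lean document; each statement's English description precedes it below -/
import Mathlib

section
/- For every x ∈ H, ∫₀^∞ ‖cfc(μ ↦ μ³ e^{−μt/2} sin((√3/2)μt))(A) x‖² dt ≤ (3/8) · ‖A^{5/2} x‖², where for each t ≥ 0, cfc(μ ↦ μ³ e^{−μt/2} sin((√3/2)μt))(A) denotes the bounded operator obtained by applying the continuous functional calculus of A to that function of μ. -/
/-!
Write `f_t(μ) = μ³ e^{-μt/2} sin(√3 μt/2)`. Since `f_t` is real,
`‖f_t(A) x‖² = re ⟪x, f_t²(A) x⟫`. The spectrum of `A` lies in a compact interval `[μ₀, M]`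
with `μ₀ > 0`, where `f_t(μ)² ≤ M⁶ e^{-μ₀ t}` is integrable in `t`, so the `t`-integral commutes
with the functional calculus. The scalar integral is elementary, `∫₀^∞ f_t(μ)² dt = 3μ⁵/8` for
`μ > 0`, and `μ⁵ = (μ^{5/2})²`; hence the inequality even holds with equality.
-/

open MeasureTheory Set Filter

noncomputable def sinKernel (t μ : ℝ) : ℝ :=
  μ ^ 3 * Real.exp (-(μ * t / 2)) * Real.sin (Real.sqrt 3 / 2 * μ * t)

noncomputable def sinKernelSqPrimitive (μ t : ℝ) : ℝ :=
  μ ^ 5 / 2 * (Real.exp (-(μ * t)) *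
    (-1 + Real.cos (Real.sqrt 3 * μ * t) / 4 - Real.sqrt 3 * Real.sin (Real.sqrt 3 * μ * t) / 4))

lemma sinKernel_sq (t μ : ℝ) :
    sinKernel t μ ^ 2 =
      μ ^ 6 * Real.exp (-(μ * t)) * Real.sin (Real.sqrt 3 / 2 * μ * t) ^ 2 := by
  have h : Real.exp (-(μ * t)) = Real.exp (-(μ * t / 2)) ^ 2 := by
    rw [← Real.exp_nat_mul]; ring_nf
  rw [sinKernel, h]; ring

lemma hasDerivAt_sinKernelSqPrimitive (μ t : ℝ) :
    HasDerivAt (sinKernelSqPrimitive μ) (sinKernel t μ ^ 2) t := by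
  have hlin : ∀ c : ℝ, HasDerivAt (fun t : ℝ => c * t) c t := fun c => by
    simpa using (hasDerivAt_id t).const_mul c
  have H := (((hlin μ).neg.exp.mul
    ((((hlin (Real.sqrt 3 * μ)).cos.div_const 4).const_add (-1)).sub
      (((hlin (Real.sqrt 3 * μ)).sin.const_mul (Real.sqrt 3)).div_const 4))).const_mul
    (μ ^ 5 / 2))
  refine H.congr_deriv ?_
  have hcos :
      Real.cos (Real.sqrt 3 * μ * t) = 1 - 2 * Real.sin (Real.sqrt 3 / 2 * μ * t) ^ 2 := by
    rw [show Real.sqrt 3 * μ * t = 2 * (Real.sqrt 3 / 2 * μ * t) by ring, Real.cos_two_mul,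
      Real.cos_sq']
    ring
  have hs3 : Real.sqrt 3 ^ 2 = 3 := Real.sq_sqrt (by norm_num)
  simp only [Pi.sub_apply, Pi.neg_apply]
  rw [sinKernel_sq, hcos]
  linear_combination
    Real.exp (-(μ * t)) * (μ ^ 6 / 8) * (2 * Real.sin (Real.sqrt 3 / 2 * μ * t) ^ 2 - 1) * hs3

lemma tendsto_sinKernelSqPrimitive_atTop {μ : ℝ} (hμ : 0 < μ) :
    Tendsto (sinKernelSqPrimitive μ) atTop (nhds 0) := by
  have hexp : Tendsto (fun t : ℝ => Real.exp (-(μ * t))) atTop (nhds 0) :=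
    Real.tendsto_exp_atBot.comp (tendsto_neg_atTop_atBot.comp (tendsto_id.const_mul_atTop hμ))
  have hbdd : IsBoundedUnder (· ≤ ·) atTop fun t : ℝ => ‖-1 + Real.cos (Real.sqrt 3 * μ * t) / 4
      - Real.sqrt 3 * Real.sin (Real.sqrt 3 * μ * t) / 4‖ := by
    refine isBoundedUnder_of ⟨3, fun t => ?_⟩
    have hs3 : Real.sqrt 3 ≤ 2 := Real.sqrt_le_iff.mpr (by norm_num)
    obtain ⟨hc₁, hc₂⟩ := abs_le.mp (Real.abs_cos_le_one (Real.sqrt 3 * μ * t))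
    obtain ⟨hs₁, hs₂⟩ := abs_le.mp (Real.abs_sin_le_one (Real.sqrt 3 * μ * t))
    rw [Real.norm_eq_abs, abs_le]
    constructor <;> nlinarith [Real.sqrt_nonneg 3]
  rw [← mul_zero (μ ^ 5 / 2)]
  exact (hexp.zero_mul_isBoundedUnder_le hbdd).const_mul _

lemma integral_sinKernel_sq {μ : ℝ} (hμ : 0 < μ) :
    ∫ t in Ioi 0, sinKernel t μ ^ 2 = 3 / 8 * μ ^ 5 := by
  rw [integral_Ioi_of_hasDerivAt_of_nonneg' (fun t _ => hasDerivAt_sinKernelSqPrimitive μ t)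
    (fun _ _ => sq_nonneg _) (tendsto_sinKernelSqPrimitive_atTop hμ)]
  simp [sinKernelSqPrimitive]
  ring

lemma sinKernel_sq_le {t μ : ℝ} : sinKernel t μ ^ 2 ≤ μ ^ 6 * Real.exp (-(μ * t)) := by
  rw [sinKernel_sq]
  exact mul_le_of_le_one_right (by positivity) (Real.sin_sq_le_one _)

lemma ae_norm_sinKernel_sq_le {S : Set ℝ} {μ₀ M : ℝ} (hS : S ⊆ Icc μ₀ M)
    (hμ₀ : 0 < μ₀) :
    ∀ᵐ t ∂(volume.restrict (Ioi 0)), ∀ μ ∈ S,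
      ‖sinKernel t μ ^ 2‖ ≤ M ^ 6 * Real.exp (-(μ₀ * t)) := by
  refine ae_restrict_of_forall_mem measurableSet_Ioi fun t (ht : 0 < t) μ hμ => ?_
  obtain ⟨hμ₀μ, hμM⟩ := hS hμ
  rw [Real.norm_of_nonneg (sq_nonneg _)]
  calc sinKernel t μ ^ 2 ≤ μ ^ 6 * Real.exp (-(μ * t)) := sinKernel_sq_le
    _ ≤ M ^ 6 * Real.exp (-(μ₀ * t)) := by gcongr; linarith

open ContinuousLinearMap RCLike

section Operator

variable {H : Type*} [NormedAddCommGroup H] [InnerProductSpace ℂ H] [CompleteSpace H]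

lemma spectrum_subset_Ici_of_le_re_inner {A : H →L[ℂ] H} (hA : IsSelfAdjoint A) {μ₀ : ℝ}
    (hpos : ∀ x : H, μ₀ * ‖x‖ ^ 2 ≤ (inner ℂ (A x) x).re) :
    spectrum ℝ A ⊆ Ici μ₀ := by
  have hle : algebraMap ℝ (H →L[ℂ] H) μ₀ ≤ A := by
    refine ⟨(hA.sub (.algebraMap _ (.all μ₀))).isSymmetric, fun x => ?_⟩
    have hμ₀x : (inner ℂ (μ₀ • x) x).re = μ₀ * ‖x‖ ^ 2 := by
      rw [← Complex.coe_smul, inner_smul_left, Complex.conj_ofReal, Complex.re_ofReal_mul]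
      exact congrArg (μ₀ * ·) (inner_self_eq_norm_sq (𝕜 := ℂ) x)
    simpa [reApplyInnerSelf, inner_sub_left, Algebra.algebraMap_eq_smul_one, hμ₀x] using hpos x
  exact fun μ hμ => (algebraMap_le_iff_le_spectrum (a := A)).mp hle μ hμ

lemma norm_cfc_apply_sq {A : H →L[ℂ] H} (f : ℝ → ℝ) (x : H)
    (hf : ContinuousOn f (spectrum ℝ A) := by cfc_cont_tac) (hA : IsSelfAdjoint A := by cfc_tac) :
    ‖cfc f A x‖ ^ 2 = re (inner ℂ x (cfc (fun μ => f μ ^ 2) A x)) := by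
  rw [apply_norm_sq_eq_inner_adjoint_right, ← star_eq_adjoint, (cfc_predicate f A).star_eq,
    cfc_pow f 2 A, sq]
  rfl

variable {X : Type*} [MeasurableSpace X] {ν : Measure X} {B : X → H →L[ℂ] H}

lemma Integrable.re_inner_apply (hB : Integrable B ν) (x : H) :
    Integrable (fun t => re (inner ℂ x (B t x))) ν :=
  (((ContinuousLinearMap.apply ℂ H x).integrable_comp hB).const_inner x).re

lemma integral_re_inner_apply (hB : Integrable B ν) (x : H) :
    ∫ t, re (inner ℂ x (B t x)) ∂ν = re (inner ℂ x ((∫ t, B t ∂ν) x)) := by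
  have hBx : Integrable (fun t => B t x) ν :=
    (ContinuousLinearMap.apply ℂ H x).integrable_comp hB
  rw [integral_re (hBx.const_inner x), integral_inner hBx x,
    ContinuousLinearMap.integral_apply hB x]

variable {A : H →L[ℂ] H} {μ₀ M : ℝ}

lemma hasFiniteIntegral_const_mul_exp_neg_mul_Ioi (hμ₀ : 0 < μ₀) (C : ℝ) :
    HasFiniteIntegral (fun t => C * Real.exp (-(μ₀ * t))) (volume.restrict (Ioi 0)) := by
  simpa only [neg_mul] using ((exp_neg_integrableOn_Ioi 0 hμ₀).const_mul C).hasFiniteIntegral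

lemma continuousOn_uncurry_sinKernel_sq (s : Set (ℝ × ℝ)) :
    ContinuousOn (Function.uncurry fun t μ => sinKernel t μ ^ 2) s := by
  unfold sinKernel; fun_prop

lemma integrableOn_cfc_sinKernel_sq (hA : IsSelfAdjoint A) (hμ₀ : 0 < μ₀)
    (hspec : spectrum ℝ A ⊆ Icc μ₀ M) :
    IntegrableOn (fun t => cfc (fun μ => sinKernel t μ ^ 2) A) (Ioi 0) :=
  integrableOn_cfc measurableSet_Ioi _ _ A (continuousOn_uncurry_sinKernel_sq _)
    (ae_norm_sinKernel_sq_le hspec hμ₀) (hasFiniteIntegral_const_mul_exp_neg_mul_Ioi hμ₀ _)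

lemma setIntegral_cfc_sinKernel_sq (hA : IsSelfAdjoint A) (hμ₀ : 0 < μ₀)
    (hspec : spectrum ℝ A ⊆ Icc μ₀ M) :
    ∫ t in Ioi 0, cfc (fun μ => sinKernel t μ ^ 2) A =
      cfc (fun μ : ℝ => 3 / 8 * μ ^ 5) A := by
  rw [← cfc_setIntegral measurableSet_Ioi _ _ A (continuousOn_uncurry_sinKernel_sq _)
    (ae_norm_sinKernel_sq_le hspec hμ₀) (hasFiniteIntegral_const_mul_exp_neg_mul_Ioi hμ₀ _)]
  exact cfc_congr fun μ hμ => integral_sinKernel_sq (hμ₀.trans_le (hspec hμ).1)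

lemma norm_cfc_rpow_five_halves_apply_sq (hA : IsSelfAdjoint A) (hspec : spectrum ℝ A ⊆ Ici 0)
    (x : H) :
    ‖cfc (fun μ : ℝ => μ ^ ((5 : ℝ) / 2)) A x‖ ^ 2 =
      re (inner ℂ x (cfc (fun μ : ℝ => μ ^ 5) A x)) := by
  rw [norm_cfc_apply_sq _ x (Real.continuous_rpow_const (by norm_num)).continuousOn,
    cfc_congr fun μ hμ => ?_]
  rw [← Real.rpow_natCast, ← Real.rpow_mul (hspec hμ)]
  norm_num

end Operator

/-- Let `A` be a bounded self-adjoint positive-definite operator on a complex Hilbert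
space `H`. Then for every `x ∈ H`,
`∫₀^∞ ‖cfc(μ ↦ μ³ e^{−μt/2} sin((√3/2)μt))(A) x‖² dt ≤ (3/8) ‖A^{5/2} x‖²`. -/
theorem stmt_3 {H : Type*} [NormedAddCommGroup H] [InnerProductSpace ℂ H] [CompleteSpace H]
    (A : H →L[ℂ] H) (hA : IsSelfAdjoint A) (μ₀ : ℝ) (hμ₀ : 0 < μ₀)
    (hpos : ∀ x : H, μ₀ * ‖x‖ ^ 2 ≤ (inner ℂ (A x) x : ℂ).re)
    (x : H) :
    ∫⁻ t in Ioi (0 : ℝ),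
        ‖cfc (fun μ : ℝ => μ ^ 3 * Real.exp (-(μ * t / 2)) *
            Real.sin (Real.sqrt 3 / 2 * μ * t)) A x‖₊ ^ 2
      ≤ ENNReal.ofReal ((3 / 8) * ‖cfc (fun μ : ℝ => μ ^ ((5 : ℝ) / 2)) A x‖ ^ 2) := by
  have hspec := spectrum_subset_Ici_of_le_re_inner hA hpos
  obtain ⟨M, hM⟩ := (spectrum.isCompact (𝕜 := ℝ) A).bddAbove
  have hspec' : spectrum ℝ A ⊆ Icc μ₀ M := fun μ hμ => ⟨hspec hμ, hM hμ⟩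
  have hint := integrableOn_cfc_sinKernel_sq hA hμ₀ hspec'
  set φ : ℝ → ℝ := fun t => re (inner ℂ x (cfc (fun μ => sinKernel t μ ^ 2) A x))
  have hsq (t : ℝ) : ‖cfc (sinKernel t) A x‖ ^ 2 = φ t :=
    norm_cfc_apply_sq _ x (by unfold sinKernel; fun_prop)
  refine le_of_eq ?_
  calc ∫⁻ t in Ioi (0 : ℝ), ‖cfc (sinKernel t) A x‖₊ ^ 2
      = ∫⁻ t in Ioi (0 : ℝ), ENNReal.ofReal (φ t) := by
        congr with t
        rw [← hsq, ENNReal.ofReal_pow (norm_nonneg _), ofReal_norm, enorm_eq_nnnorm]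
    _ = ENNReal.ofReal (∫ t in Ioi (0 : ℝ), φ t) :=
        (ofReal_integral_eq_lintegral_ofReal (Integrable.re_inner_apply hint x)
          (ae_of_all _ fun t => (sq_nonneg _).trans_eq (hsq t))).symm
    _ = _ := by
        rw [integral_re_inner_apply hint, setIntegral_cfc_sinKernel_sq hA hμ₀ hspec',
          cfc_const_mul (3 / 8) (fun μ : ℝ => μ ^ 5) A, smul_apply,
          real_smul_eq_coe_smul (K := ℂ), inner_smul_right, re_ofReal_mul,
          norm_cfc_rpow_five_halves_apply_sq hA (fun μ hμ => hμ₀.le.trans (hspec hμ))]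
end

section
/- Assume κ < 1. If u is admissible, u'''(t) = A³u(t) for almost every t > 0, u(0) = 0, and u'(0) = Ku, then u(t) = 0 for all t ≥ 0. -/
open MeasureTheory Set

noncomputable section

/-- The `L²(ℝ₊;H)` norm of a function `v : ℝ → H` (restricted to `(0,∞)`):
`‖v‖_{L²} = (∫₀^∞ ‖v(t)‖² dt)^{1/2}`. -/
def L2norm {H : Type*} [NormedAddCommGroup H] (v : ℝ → H) : ℝ :=
  Real.sqrt (∫ t in Ioi (0 : ℝ), ‖v t‖ ^ 2)

/-- `A^γ`, the bounded operator obtained by applying the continuous functional calculus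
of `A` to the function `μ ↦ μ^γ`. -/
def Apow {H : Type*} [NormedAddCommGroup H] [InnerProductSpace ℂ H] [CompleteSpace H]
    (A : H →L[ℂ] H) (γ : ℝ) : H →L[ℂ] H :=
  cfc (fun μ : ℝ => μ ^ γ) A

/-- A function `u : ℝ → H`, thought of as defined on `[0,∞)`, is admissible (with
derivative witnesses `u'`, `u''`, `u'''`): `u` is twice continuously differentiable on
`[0,∞)`, `u''` is locally absolutely continuous with a.e. derivative `u'''` (expressed by
the fundamental theorem of calculus identity), and `u, u', u'', u'''` are all
square-integrable on `(0,∞)`. -/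
structure Admissible {H : Type*} [NormedAddCommGroup H] [InnerProductSpace ℂ H]
    (u u' u'' u''' : ℝ → H) : Prop where
  hasDeriv1 : ∀ t ∈ Ici (0 : ℝ), HasDerivWithinAt u (u' t) (Ici 0) t
  hasDeriv2 : ∀ t ∈ Ici (0 : ℝ), HasDerivWithinAt u' (u'' t) (Ici 0) t
  cont2 : ContinuousOn u'' (Ici 0)
  locInt3 : LocallyIntegrableOn u''' (Ici 0)
  fund : ∀ t ∈ Ici (0 : ℝ), u'' t = u'' 0 + ∫ s in Ioc (0 : ℝ) t, u''' s
  sq0 : MemLp u 2 (volume.restrict (Ioi 0))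
  sq1 : MemLp u' 2 (volume.restrict (Ioi 0))
  sq2 : MemLp u'' 2 (volume.restrict (Ioi 0))
  sq3 : MemLp u''' 2 (volume.restrict (Ioi 0))

/-- The norm `‖u‖_W = (‖u'''‖²_{L²} + ‖A³u‖²_{L²})^{1/2}`. -/
def Wnorm {H : Type*} [NormedAddCommGroup H] [InnerProductSpace ℂ H]
    (A : H →L[ℂ] H) (u u''' : ℝ → H) : ℝ :=
  Real.sqrt ((∫ t in Ioi (0 : ℝ), ‖u''' t‖ ^ 2) + ∫ t in Ioi (0 : ℝ), ‖(A ^ 3) (u t)‖ ^ 2)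

end

/-!
Testing `u''' = A³u` against `A³u` and integrating by parts twice (legitimate because `u''`
is the primitive of a locally integrable function) gives, for every `T ≥ 0`,
`∫₀ᵀ ‖A³u‖² = Re⟪u''(T), A³u(T)⟫ - ½ Re⟪u'(T), A³u'(T)⟫ + ½ ‖A^{3/2} u'(0)‖²`.
The boundary terms at `T` are integrable on `(0, ∞)` and converge as `T → ∞`, so their limit
is zero. With `u''' = A³u` this says `‖u‖_W = ‖A^{3/2} K u‖ ≤ κ ‖u‖_W`, so `‖u‖_W = 0` since
`κ < 1`; as `A` is coercive, `A³` is injective and `u` vanishes.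
-/

open Filter Topology
open scoped InnerProductSpace

section Bilinear

variable {E F G : Type*} [NormedAddCommGroup E] [NormedSpace ℝ E] [NormedAddCommGroup F]
  [NormedSpace ℝ F] [NormedAddCommGroup G] [NormedSpace ℝ G]

theorem IntervalIntegrable.bilinear_continuousOn (L : E →L[ℝ] F →L[ℝ] G) {f : ℝ → E}
    {g : ℝ → F} {a b : ℝ} (hf : IntervalIntegrable f volume a b)
    (hg : ContinuousOn g (uIcc a b)) :
    IntervalIntegrable (fun t => L (f t) (g t)) volume a b := by
  obtain ⟨C, hC⟩ := isCompact_uIcc.exists_bound_of_continuousOn hg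
  refine (hf.norm.const_mul (‖L‖ * C)).mono_fun'
    (L.aestronglyMeasurable_comp₂ hf.def'.aestronglyMeasurable
      ((hg.mono uIoc_subset_uIcc).aestronglyMeasurable measurableSet_uIoc)) ?_
  filter_upwards [ae_restrict_mem measurableSet_uIoc] with t ht
  calc ‖L (f t) (g t)‖ ≤ ‖L‖ * ‖f t‖ * ‖g t‖ := L.le_opNorm₂ _ _
    _ ≤ ‖L‖ * ‖f t‖ * C := by gcongr; exact hC t (uIoc_subset_uIcc ht)
    _ = ‖L‖ * C * ‖f t‖ := by ring

theorem intervalIntegral_intervalIntegral_swap_triangle {F : ℝ → ℝ → G} {a b : ℝ} (hab : a ≤ b)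
    (hF : IntegrableOn (Function.uncurry F) (Ioc a b ×ˢ Ioc a b)) :
    ∫ t in a..b, ∫ s in a..t, F t s = ∫ s in a..b, ∫ t in s..b, F t s := by
  set D := {p : ℝ × ℝ | p.2 ≤ p.1}
  have hint : Integrable (D.indicator (Function.uncurry F))
      ((volume.restrict (Ioc a b)).prod (volume.restrict (Ioc a b))) := by
    rw [Measure.prod_restrict, ← Measure.volume_eq_prod]
    exact hF.integrable.indicator (measurableSet_le measurable_snd measurable_fst)
  simp only [intervalIntegral.integral_of_le hab]
  calc ∫ t in Ioc a b, ∫ s in a..t, F t s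
      = ∫ t in Ioc a b, ∫ s in Ioc a b, D.indicator (Function.uncurry F) (t, s) := by
        refine setIntegral_congr_fun measurableSet_Ioc fun t ht => ?_
        have hsection : (fun s => D.indicator (Function.uncurry F) (t, s)) =
            (Iic t).indicator (F t) := by
          ext s; simp [D, indicator_apply]
        rw [hsection, setIntegral_indicator measurableSet_Iic, Ioc_inter_Iic, min_eq_right ht.2,
          intervalIntegral.integral_of_le ht.1.le]
    _ = ∫ s in Ioc a b, ∫ t in Ioc a b, D.indicator (Function.uncurry F) (t, s) :=
        integral_integral_swap hint
    _ = ∫ s in Ioc a b, ∫ t in s..b, F t s := by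
        refine setIntegral_congr_fun measurableSet_Ioc fun s hs => ?_
        have hsection : (fun t => D.indicator (Function.uncurry F) (t, s)) =
            (Ici s).indicator (F · s) := by
          ext t; simp [D, indicator_apply]
        have hset : Ioc a b ∩ Ici s = Icc s b := by
          ext r; simp only [mem_inter_iff, mem_Ioc, mem_Ici, mem_Icc]; grind
        rw [hsection, setIntegral_indicator measurableSet_Ici, hset, integral_Icc_eq_integral_Ioc,
          intervalIntegral.integral_of_le hs.2]

theorem continuousOn_Icc_of_intervalIntegral_eq_sub {g g' : ℝ → F} {a b : ℝ} (hab : a ≤ b)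
    (hg' : IntervalIntegrable g' volume a b)
    (hg : ∀ t ∈ Icc a b, ∫ s in a..t, g' s = g t - g a) : ContinuousOn g (Icc a b) := by
  have hprim := intervalIntegral.continuousOn_primitive_interval' hg' left_mem_uIcc
  rw [uIcc_of_le hab] at hprim
  exact (hprim.const_add (g a)).congr fun t ht => by simp [hg t ht]

variable [CompleteSpace E] [CompleteSpace F] [CompleteSpace G]

theorem intervalIntegral_bilinear_primitive_swap (L : E →L[ℝ] F →L[ℝ] G) {f' : ℝ → E}
    {g' : ℝ → F} {a b : ℝ} (hab : a ≤ b) (hf' : IntervalIntegrable f' volume a b)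
    (hg' : IntervalIntegrable g' volume a b) :
    ∫ t in a..b, L (f' t) (∫ s in a..t, g' s) = ∫ s in a..b, L (∫ t in s..b, f' t) (g' s) := by
  have hprod : IntegrableOn (Function.uncurry fun t s => L (f' t) (g' s))
      (Ioc a b ×ˢ Ioc a b) := by
    have hf'i := (intervalIntegrable_iff_integrableOn_Ioc_of_le hab).1 hf'
    have hg'i := (intervalIntegrable_iff_integrableOn_Ioc_of_le hab).1 hg'
    rw [IntegrableOn, Measure.volume_eq_prod, ← Measure.prod_restrict]
    exact Integrable.mono' ((hf'i.norm.const_mul ‖L‖).mul_prod hg'i.norm)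
      (L.aestronglyMeasurable_comp₂ hf'i.aestronglyMeasurable.comp_fst
        hg'i.aestronglyMeasurable.comp_snd) (Eventually.of_forall fun _ => L.le_opNorm₂ _ _)
  calc ∫ t in a..b, L (f' t) (∫ s in a..t, g' s)
      = ∫ t in a..b, ∫ s in a..t, L (f' t) (g' s) :=
        intervalIntegral.integral_congr fun t ht => ((L (f' t)).intervalIntegral_comp_comm
          (hg'.mono_set (uIcc_subset_uIcc_left ht))).symm
    _ = ∫ s in a..b, ∫ t in s..b, L (f' t) (g' s) :=
        intervalIntegral_intervalIntegral_swap_triangle hab hprod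
    _ = ∫ s in a..b, L (∫ t in s..b, f' t) (g' s) :=
        intervalIntegral.integral_congr fun s hs => (L.flip (g' s)).intervalIntegral_comp_comm
          (hf'.mono_set (uIcc_subset_uIcc_right hs))

theorem intervalIntegral_bilinear_eq_sub_of_primitive (L : E →L[ℝ] F →L[ℝ] G) {f f' : ℝ → E}
    {g g' : ℝ → F} {a b : ℝ} (hab : a ≤ b) (hf' : IntervalIntegrable f' volume a b)
    (hg' : IntervalIntegrable g' volume a b)
    (hf : ∀ t ∈ Icc a b, ∫ s in a..t, f' s = f t - f a)
    (hg : ∀ t ∈ Icc a b, ∫ s in a..t, g' s = g t - g a) :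
    ∫ t in a..b, L (f' t) (g t) =
      L (f b) (g b) - L (f a) (g a) - ∫ t in a..b, L (f t) (g' t) := by
  have hfc := continuousOn_Icc_of_intervalIntegral_eq_sub hab hf' hf
  have hgc := continuousOn_Icc_of_intervalIntegral_eq_sub hab hg' hg
  rw [← uIcc_of_le hab] at hfc hgc
  have hb : b ∈ Icc a b := right_mem_Icc.2 hab
  have hleft : ∫ t in a..b, L (f' t) (g a) = L (f b - f a) (g a) := by
    rw [← hf b hb]; exact (L.flip (g a)).intervalIntegral_comp_comm hf'
  have hright : ∫ t in a..b, L (f b) (g' t) = L (f b) (g b - g a) := by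
    rw [← hg b hb]; exact (L (f b)).intervalIntegral_comp_comm hg'
  calc ∫ t in a..b, L (f' t) (g t)
      = ∫ t in a..b, L (f' t) (g a) + L (f' t) (g t - g a) := by simp
    _ = L (f b - f a) (g a) + ∫ t in a..b, L (f' t) (∫ s in a..t, g' s) := by
        rw [intervalIntegral.integral_add (hf'.bilinear_continuousOn L continuousOn_const)
          (hf'.bilinear_continuousOn L (g := fun t => g t - g a) (hgc.sub continuousOn_const)),
          hleft]
        congr 1
        refine intervalIntegral.integral_congr fun t ht => ?_
        rw [uIcc_of_le hab] at ht
        simp [hg t ht]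
    _ = L (f b - f a) (g a) + ∫ s in a..b, L (f b - f s) (g' s) := by
        rw [intervalIntegral_bilinear_primitive_swap L hab hf' hg']
        congr 1
        refine intervalIntegral.integral_congr fun s hs => ?_
        rw [← intervalIntegral.integral_interval_sub_left hf' (hf'.mono_set
          (uIcc_subset_uIcc_left hs))]
        rw [uIcc_of_le hab] at hs
        rw [hf b hb, hf s hs, sub_sub_sub_cancel_right]
    _ = L (f b) (g b) - L (f a) (g a) - ∫ t in a..b, L (f t) (g' t) := by
        have hconst : IntervalIntegrable (fun t => L (f b) (g' t)) volume a b :=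
          hg'.bilinear_continuousOn L.flip continuousOn_const
        have hvar : IntervalIntegrable (fun t => L (f t) (g' t)) volume a b :=
          hg'.bilinear_continuousOn L.flip hfc
        simp only [map_sub, sub_apply]
        rw [intervalIntegral.integral_sub hconst hvar, hright]
        simp only [map_sub]
        abel

end Bilinear

theorem intervalIntegral_eq_sub_of_hasDerivWithinAt_Ici {E : Type*} [NormedAddCommGroup E]
    [NormedSpace ℝ E] [CompleteSpace E] {f f' : ℝ → E}
    (hf : ∀ t ∈ Ici (0 : ℝ), HasDerivWithinAt f (f' t) (Ici 0) t) (hf' : ContinuousOn f' (Ici 0))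
    {t : ℝ} (ht : 0 ≤ t) : ∫ s in 0..t, f' s = f t - f 0 :=
  intervalIntegral.integral_eq_sub_of_hasDeriv_right_of_le ht
    (fun s hs => (hf s hs.1).continuousWithinAt.mono Icc_subset_Ici_self)
    (fun s hs => (hf s hs.1.le).mono fun _ hr => hs.1.le.trans (le_of_lt hr))
    ((hf'.mono Icc_subset_Ici_self).intervalIntegrable_of_Icc ht)

theorem MeasureTheory.MemLp.integrable_re_inner {α 𝕜 E : Type*} [MeasurableSpace α]
    {μ : Measure α} [RCLike 𝕜] [NormedAddCommGroup E] [InnerProductSpace 𝕜 E] {f g : α → E}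
    (hf : MemLp f 2 μ) (hg : MemLp g 2 μ) : Integrable (fun x => RCLike.re ⟪f x, g x⟫_𝕜) μ :=
  (hf.norm.integrable_mul hg.norm).mono' (hf.1.inner hg.1).re <| Eventually.of_forall fun _ =>
    (RCLike.norm_re_le_norm _).trans (norm_inner_le_norm _ _)

theorem Real.volume_eq_top_of_mem_atTop {s : Set ℝ} (hs : s ∈ atTop) : volume s = ⊤ := by
  obtain ⟨a, ha⟩ := mem_atTop_sets.1 hs
  exact top_unique ((Real.volume_Ici (a := a)).symm.le.trans (measure_mono fun x hx => ha x hx))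

section Operator

variable {H : Type*} [NormedAddCommGroup H] [InnerProductSpace ℂ H]

theorem IsSelfAdjoint.re_inner_apply_comm [CompleteSpace H] {B : H →L[ℂ] H}
    (hB : IsSelfAdjoint B) (x y : H) : (⟪x, B y⟫_ℂ).re = (⟪y, B x⟫_ℂ).re := by
  have h := hB.isSymmetric x y
  rw [ContinuousLinearMap.coe_coe] at h
  rw [← h]
  exact inner_re_symm (𝕜 := ℂ) _ _

theorem norm_Apow_half_sq [CompleteSpace H] {A : H →L[ℂ] H} (hA : 0 ≤ A) (n : ℕ) (x : H) :
    ‖Apow A (n / 2) x‖ ^ 2 = (⟪x, (A ^ n) x⟫_ℂ).re := by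
  have hcont : ContinuousOn (fun μ : ℝ => μ ^ ((n : ℝ) / 2)) (spectrum ℝ A) :=
    (Real.continuous_rpow_const (by positivity)).continuousOn
  have hsq : Apow A (n / 2) * Apow A (n / 2) = A ^ n := by
    rw [Apow, ← cfc_mul _ _ A hcont hcont, ← cfc_pow_id A n (R := ℝ) hA.isSelfAdjoint]
    refine cfc_congr fun μ hμ => ?_
    rw [← Real.rpow_add_of_nonneg (spectrum_nonneg_of_nonneg hA hμ) (by positivity)
      (by positivity), add_halves, Real.rpow_natCast]
  have hsa : IsSelfAdjoint (Apow A (n / 2)) := cfc_predicate _ A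
  rw [← inner_self_eq_norm_sq (𝕜 := ℂ), ← ContinuousLinearMap.adjoint_inner_right,
    hsa.adjoint_eq, ← mul_apply_eq_comp, hsq]
  rfl

theorem ContinuousLinearMap.nonneg_of_coercive [CompleteSpace H] {A : H →L[ℂ] H}
    (hA : IsSelfAdjoint A) {μ₀ : ℝ} (hμ₀ : 0 < μ₀)
    (hpos : ∀ x : H, μ₀ * ‖x‖ ^ 2 ≤ (⟪A x, x⟫_ℂ).re) : 0 ≤ A := by
  refine (ContinuousLinearMap.nonneg_iff_isPositive A).2 ⟨hA.isSymmetric, fun x => ?_⟩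
  rw [ContinuousLinearMap.reApplyInnerSelf_apply]
  exact (by positivity : 0 ≤ μ₀ * ‖x‖ ^ 2).trans (hpos x)

theorem ContinuousLinearMap.injective_of_coercive {A : H →L[ℂ] H} {μ₀ : ℝ} (hμ₀ : 0 < μ₀)
    (hpos : ∀ x : H, μ₀ * ‖x‖ ^ 2 ≤ (⟪A x, x⟫_ℂ).re) : Function.Injective A := by
  refine (injective_iff_map_eq_zero A).2 fun x hx => ?_
  have h := hpos x
  rw [hx, inner_zero_left, Complex.zero_re] at h
  have : ‖x‖ ^ 2 ≤ 0 := nonpos_of_mul_nonpos_right h hμ₀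
  simpa using this

end Operator

namespace Admissible

variable {H : Type*} [NormedAddCommGroup H] [InnerProductSpace ℂ H] {u u' u'' u''' : ℝ → H}

theorem continuousOn (hu : Admissible u u' u'' u''') : ContinuousOn u (Ici 0) :=
  fun t ht => (hu.hasDeriv1 t ht).continuousWithinAt

theorem continuousOn_deriv (hu : Admissible u u' u'' u''') : ContinuousOn u' (Ici 0) :=
  fun t ht => (hu.hasDeriv2 t ht).continuousWithinAt

theorem intervalIntegrable_deriv (hu : Admissible u u' u'' u''') {T : ℝ} (hT : 0 ≤ T) :
    IntervalIntegrable u' volume 0 T :=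
  (hu.continuousOn_deriv.mono Icc_subset_Ici_self).intervalIntegrable_of_Icc hT

theorem intervalIntegrable_deriv₂ (hu : Admissible u u' u'' u''') {T : ℝ} (hT : 0 ≤ T) :
    IntervalIntegrable u'' volume 0 T :=
  (hu.cont2.mono Icc_subset_Ici_self).intervalIntegrable_of_Icc hT

theorem intervalIntegrable_deriv₃ (hu : Admissible u u' u'' u''') {T : ℝ} (hT : 0 ≤ T) :
    IntervalIntegrable u''' volume 0 T :=
  (intervalIntegrable_iff_integrableOn_Icc_of_le hT).2
    (hu.locInt3.integrableOn_compact_subset Icc_subset_Ici_self isCompact_Icc)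

theorem intervalIntegral_deriv [CompleteSpace H] (hu : Admissible u u' u'' u''') {t : ℝ}
    (ht : 0 ≤ t) : ∫ s in 0..t, u' s = u t - u 0 :=
  intervalIntegral_eq_sub_of_hasDerivWithinAt_Ici hu.hasDeriv1 hu.continuousOn_deriv ht

theorem intervalIntegral_deriv₂ [CompleteSpace H] (hu : Admissible u u' u'' u''') {t : ℝ}
    (ht : 0 ≤ t) : ∫ s in 0..t, u'' s = u' t - u' 0 :=
  intervalIntegral_eq_sub_of_hasDerivWithinAt_Ici hu.hasDeriv2 hu.cont2 ht

theorem intervalIntegral_deriv₃ (hu : Admissible u u' u'' u''') {t : ℝ} (ht : 0 ≤ t) :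
    ∫ s in 0..t, u''' s = u'' t - u'' 0 := by
  rw [intervalIntegral.integral_of_le ht, hu.fund t ht, add_sub_cancel_left]

theorem integral_re_inner_deriv₃_eq [CompleteSpace H] (hu : Admissible u u' u'' u''')
    {B : H →L[ℂ] H} (hB : IsSelfAdjoint B) (h0 : u 0 = 0) {T : ℝ} (hT : 0 ≤ T) :
    ∫ t in 0..T, (⟪u''' t, B (u t)⟫_ℂ).re = (⟪u'' T, B (u T)⟫_ℂ).re
      - (⟪u' T, B (u' T)⟫_ℂ).re / 2 + (⟪u' 0, B (u' 0)⟫_ℂ).re / 2 := by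
  let _ : InnerProductSpace ℝ H := InnerProductSpace.rclikeToReal ℂ H
  have hBprim {v v' : ℝ → H} (hv : ∀ t ∈ Icc 0 T, ∫ s in 0..t, v' s = v t - v 0)
      (hv' : IntervalIntegrable v' volume 0 T) :
      ∀ t ∈ Icc 0 T, ∫ s in 0..t, B (v' s) = B (v t) - B (v 0) := fun t ht => by
    rw [B.intervalIntegral_comp_comm (hv'.mono_set (uIcc_subset_uIcc_left
      (by rwa [uIcc_of_le hT]))), hv t ht, map_sub]
  have hBint {v : ℝ → H} (hv : IntervalIntegrable v volume 0 T) :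
      IntervalIntegrable (fun t => B (v t)) volume 0 T :=
    ⟨B.integrable_comp hv.1, B.integrable_comp hv.2⟩
  have hibp₁ := intervalIntegral_bilinear_eq_sub_of_primitive (innerSL ℝ (E := H)) hT
    (hu.intervalIntegrable_deriv₃ hT) (hBint (hu.intervalIntegrable_deriv hT))
    (fun t ht => hu.intervalIntegral_deriv₃ ht.1)
    (hBprim (fun t ht => hu.intervalIntegral_deriv ht.1) (hu.intervalIntegrable_deriv hT))
  have hibp₂ := intervalIntegral_bilinear_eq_sub_of_primitive (innerSL ℝ (E := H)) hT
    (hu.intervalIntegrable_deriv₂ hT) (hBint (hu.intervalIntegrable_deriv₂ hT))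
    (fun t ht => hu.intervalIntegral_deriv₂ ht.1)
    (hBprim (fun t ht => hu.intervalIntegral_deriv₂ ht.1) (hu.intervalIntegrable_deriv₂ hT))
  have hre (x y : H) : innerSL ℝ x y = (⟪x, y⟫_ℂ).re := rfl
  have hsymm : ∫ t in 0..T, (⟪u' t, B (u'' t)⟫_ℂ).re =
      ∫ t in 0..T, (⟪u'' t, B (u' t)⟫_ℂ).re :=
    intervalIntegral.integral_congr fun t _ => hB.re_inner_apply_comm _ _
  simp only [hre, hsymm, h0, map_zero, inner_zero_right, Complex.zero_re] at hibp₁ hibp₂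
  linarith

theorem integral_norm_sq_eq [CompleteSpace H] (hu : Admissible u u' u'' u''') {B : H →L[ℂ] H}
    (hB : IsSelfAdjoint B) (h0 : u 0 = 0)
    (heq : ∀ᵐ t ∂(volume.restrict (Ioi 0)), u''' t = B (u t)) :
    ∫ t in Ioi 0, ‖B (u t)‖ ^ 2 = (⟪u' 0, B (u' 0)⟫_ℂ).re / 2 := by
  set φ : ℝ → ℝ := fun T => (⟪u'' T, B (u T)⟫_ℂ).re - (⟪u' T, B (u' T)⟫_ℂ).re / 2
  have hBu : MemLp (fun t => B (u t)) 2 (volume.restrict (Ioi 0)) := B.comp_memLp' hu.sq0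
  have hφ : IntegrableOn φ (Ioi 0) :=
    (hu.sq2.integrable_re_inner (𝕜 := ℂ) hBu).sub
      ((hu.sq1.integrable_re_inner (𝕜 := ℂ) (B.comp_memLp' hu.sq1)).div_const 2)
  have hlim : Tendsto (fun T => ∫ t in 0..T, ‖B (u t)‖ ^ 2) atTop
      (𝓝 (∫ t in Ioi 0, ‖B (u t)‖ ^ 2)) :=
    intervalIntegral_tendsto_integral_Ioi 0 (hBu.integrable_norm_pow two_ne_zero) tendsto_id
  have henergy : ∀ T ≥ (0 : ℝ),
      (∫ t in 0..T, ‖B (u t)‖ ^ 2) - (⟪u' 0, B (u' 0)⟫_ℂ).re / 2 = φ T := fun T hT => by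
    have hae : ∀ᵐ t, t ∈ Ioi 0 → u''' t = B (u t) := (ae_restrict_iff' measurableSet_Ioi).1 heq
    have hcongr : ∫ t in 0..T, ‖B (u t)‖ ^ 2 = ∫ t in 0..T, (⟪u''' t, B (u t)⟫_ℂ).re := by
      refine intervalIntegral.integral_congr_ae (hae.mono fun t ht htT => ?_)
      rw [ht (uIoc_of_le hT ▸ htT).1]
      exact (inner_self_eq_norm_sq (𝕜 := ℂ) _).symm
    rw [hcongr, integral_re_inner_deriv₃_eq hu hB h0 hT]
    ring
  have hφlim : Tendsto φ atTop
      (𝓝 ((∫ t in Ioi 0, ‖B (u t)‖ ^ 2) - (⟪u' 0, B (u' 0)⟫_ℂ).re / 2)) :=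
    (hlim.sub_const _).congr' (eventually_ge_atTop 0 |>.mono henergy)
  have := IntegrableAtFilter.eq_zero_of_tendsto ⟨Ioi 0, Ioi_mem_atTop 0, hφ⟩
    (fun _ => Real.volume_eq_top_of_mem_atTop) hφlim
  linarith

theorem eqOn_zero_of_integral_norm_sq_eq_zero (hu : Admissible u u' u'' u''') {B : H →L[ℂ] H}
    (hB : Function.Injective B) (hI : ∫ t in Ioi 0, ‖B (u t)‖ ^ 2 = 0) :
    ∀ t ∈ Ici (0 : ℝ), u t = 0 := by
  have hint := (B.comp_memLp' hu.sq0).integrable_norm_pow two_ne_zero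
  have hae : u =ᵐ[volume.restrict (Ioi 0)] 0 := by
    filter_upwards [(integral_eq_zero_iff_of_nonneg (fun t => sq_nonneg _) hint).1 hI] with t ht
    exact hB (by simpa using ht)
  rw [Measure.restrict_congr_set Ioi_ae_eq_Ici] at hae
  exact Measure.eqOn_of_ae_eq hae hu.continuousOn continuousOn_const
    (by rw [interior_Ici, closure_Ioi])

end Admissible

theorem stmt_5_general {H : Type*} [NormedAddCommGroup H] [InnerProductSpace ℂ H] [CompleteSpace H]
    (A : H →L[ℂ] H) (hA : IsSelfAdjoint A) (μ₀ : ℝ) (hμ₀ : 0 < μ₀)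
    (hpos : ∀ x : H, μ₀ * ‖x‖ ^ 2 ≤ (inner ℂ (A x) x : ℂ).re)
    (K : (ℝ → H) →ₗ[ℂ] H) (κ : ℝ)
    (hK : ∀ u u' u'' u''' : ℝ → H, Admissible u u' u'' u''' →
      ‖Apow A (3 / 2) (K u)‖ ≤ κ * Wnorm A u u''')
    (hκ1 : κ < 1)
    (u u' u'' u''' : ℝ → H) (hu : Admissible u u' u'' u''')
    (heq : ∀ᵐ t ∂(volume.restrict (Ioi 0)), u''' t = (A ^ 3) (u t))
    (h0 : u 0 = 0) (h1 : u' 0 = K u) :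
    ∀ t ∈ Ici (0 : ℝ), u t = 0 := by
  have hA3 : ∫ t in Ioi 0, ‖(A ^ 3) (u t)‖ ^ 2 = ‖Apow A (3 / 2) (K u)‖ ^ 2 / 2 := by
    rw [hu.integral_norm_sq_eq (hA.pow 3) h0 heq, ← h1,
      ← norm_Apow_half_sq (ContinuousLinearMap.nonneg_of_coercive hA hμ₀ hpos) 3]
    norm_num
  have hW : Wnorm A u u''' = ‖Apow A (3 / 2) (K u)‖ := by
    have h3 : ∫ t in Ioi 0, ‖u''' t‖ ^ 2 = ∫ t in Ioi 0, ‖(A ^ 3) (u t)‖ ^ 2 :=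
      integral_congr_ae (heq.mono fun t ht => by simp only [ht])
    rw [Wnorm, h3, hA3, add_halves, Real.sqrt_sq (norm_nonneg _)]
  have hKu : ‖Apow A (3 / 2) (K u)‖ = 0 := by
    have h := hK u u' u'' u''' hu
    rw [hW] at h
    nlinarith [norm_nonneg (Apow A (3 / 2) (K u))]
  have hinj : Function.Injective ⇑(A ^ 3) := by
    rw [FunLike.coe_pow_eq_iterate]
    exact (ContinuousLinearMap.injective_of_coercive hμ₀ hpos).iterate 3
  exact hu.eqOn_zero_of_integral_norm_sq_eq_zero hinj (by rw [hA3, hKu]; norm_num)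

/-- Assume `κ < 1`. If `u` is admissible, `u'''(t) = A³u(t)` for a.e. `t > 0`,
`u(0) = 0`, and `u'(0) = Ku`, then `u(t) = 0` for all `t ≥ 0`. -/
theorem stmt_5 {H : Type*} [NormedAddCommGroup H] [InnerProductSpace ℂ H] [CompleteSpace H]
    (A : H →L[ℂ] H) (hA : IsSelfAdjoint A) (μ₀ : ℝ) (hμ₀ : 0 < μ₀)
    (hpos : ∀ x : H, μ₀ * ‖x‖ ^ 2 ≤ (inner ℂ (A x) x : ℂ).re)
    (K : (ℝ → H) →ₗ[ℂ] H) (κ : ℝ) (hκ0 : 0 ≤ κ)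
    (hK : ∀ u u' u'' u''' : ℝ → H, Admissible u u' u'' u''' →
      ‖Apow A (3 / 2) (K u)‖ ≤ κ * Wnorm A u u''')
    (hκ1 : κ < 1)
    (u u' u'' u''' : ℝ → H) (hu : Admissible u u' u'' u''')
    (heq : ∀ᵐ t ∂(volume.restrict (Ioi 0)), u''' t = (A ^ 3) (u t))
    (h0 : u 0 = 0) (h1 : u' 0 = K u) :
    ∀ t ∈ Ici (0 : ℝ), u t = 0 :=
  stmt_5_general A hA μ₀ hμ₀ hpos K κ hK hκ1 u u' u'' u''' hu heq h0 h1
end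

section
/- If u is admissible and u(0) = 0, then 2 Re ∫₀^∞ ⟨u'''(t), A³u(t)⟩ dt = ‖A^{3/2} u'(0)‖². -/
open MeasureTheory Set

/-!
With `K = A³` self-adjoint, the energy `E t = Re ⟪u'' t, K u t⟫ - Re ⟪u' t, K u' t⟫ / 2` satisfies
`E T - E 0 = ∫₀ᵀ Re ⟪u''', K u⟫`: one integration by parts moves a derivative from `u'''` onto
`K u`, and the remaining `∫₀ᵀ Re ⟪u'', K u'⟫` is half the increment of `Re ⟪u', K u'⟫` because `K`
is self-adjoint. As `u''` is only absolutely continuous, integration by parts is done by Fubini,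
splitting the square `(a, b]²` along its diagonal. `E` is integrable on `(0, ∞)`, being built from
products of `L²` functions, so `E T → 0`; and `E 0 = -Re ⟪u' 0, A³ u' 0⟫ / 2` since `u 0 = 0`.
Finally `Re ⟪x, A³ x⟫ = ‖A^{3/2} x‖²` because `A ≥ 0` and `A^{3/2} A^{3/2} = A³`.
-/

open Filter Topology

section RealLine

variable {E : Type*} [NormedAddCommGroup E] [NormedSpace ℝ E] {a b t : ℝ}

theorem setIntegral_Ioc_eq_integral_indicator_Iic (ht : t ≤ b) (g : ℝ → E) :
    ∫ s in Ioc a t, g s = ∫ s in Ioc a b, (Iic t).indicator g s := by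
  rw [integral_indicator measurableSet_Iic, Measure.restrict_restrict measurableSet_Iic,
    Iic_inter_Ioc_of_le ht]

theorem setIntegral_Ioc_eq_integral_indicator_Iio (ht : t ≤ b) (g : ℝ → E) :
    ∫ s in Ioc a t, g s = ∫ s in Ioc a b, (Iio t).indicator g s := by
  rw [integral_indicator measurableSet_Iio, Measure.restrict_restrict measurableSet_Iio,
    integral_Ioc_eq_integral_Ioo]
  congr 2
  ext s
  simp only [mem_inter_iff, mem_Iio, mem_Ioc, mem_Ioo]
  constructor
  · rintro ⟨has, hst⟩; exact ⟨hst, has, hst.le.trans ht⟩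
  · rintro ⟨hst, has, -⟩; exact ⟨has, hst⟩

theorem integral_Ioi_eq_neg_of_integral_Ioc_eq_sub {φ G : ℝ → E} (hφ : IntegrableOn φ (Ioi a))
    (hG : IntegrableOn G (Ioi a)) (h : ∀ T > a, ∫ t in Ioc a T, φ t = G T - G a) :
    ∫ t in Ioi a, φ t = -G a := by
  have hlim : Tendsto G atTop (𝓝 ((∫ t in Ioi a, φ t) + G a)) := by
    refine ((intervalIntegral_tendsto_integral_Ioi a hφ tendsto_id).add_const (G a)).congr' ?_
    filter_upwards [eventually_gt_atTop a] with T hT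
    rw [id, intervalIntegral.integral_of_le hT.le, h T hT, sub_add_cancel]
  refine eq_neg_of_add_eq_zero_left (IntegrableAtFilter.eq_zero_of_tendsto
    ⟨Ioi a, Ioi_mem_atTop a, hG⟩ (fun s hs => ?_) hlim)
  obtain ⟨T, hT⟩ := mem_atTop_sets.1 hs
  exact top_le_iff.1 (Real.volume_Ici (a := T) ▸ measure_mono hT)

variable [CompleteSpace E]

theorem eq_add_setIntegral_Ioc_of_hasDerivWithinAt_Ici {φ φ' : ℝ → E}
    (hφ : ∀ t ∈ Ici a, HasDerivWithinAt φ (φ' t) (Ici a) t) (hφ' : ContinuousOn φ' (Ici a))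
    (ht : t ∈ Ici a) : φ t = φ a + ∫ s in Ioc a t, φ' s := by
  rw [← intervalIntegral.integral_of_le ht, intervalIntegral.integral_eq_sub_of_hasDerivAt_of_le ht
    (fun s hs => (hφ s (Icc_subset_Ici_self hs)).continuousWithinAt.mono Icc_subset_Ici_self)
    (fun s hs => (hφ s (Ioo_subset_Ioi_self.trans Ioi_subset_Ici_self hs)).hasDerivAt
      (Ici_mem_nhds hs.1))
    ((hφ'.mono Icc_subset_Ici_self).intervalIntegrable_of_Icc ht), add_sub_cancel]

end RealLine

section InnerProduct

variable {α 𝕜 E : Type*} [MeasurableSpace α] {μ : Measure α} [RCLike 𝕜]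
  [NormedAddCommGroup E] [InnerProductSpace 𝕜 E]

local notation "⟪" x ", " y "⟫" => inner 𝕜 x y

theorem MeasureTheory.MemLp.integrable_inner {f g : α → E} (hf : MemLp f 2 μ)
    (hg : MemLp g 2 μ) : Integrable (fun x => ⟪f x, g x⟫) μ :=
  (L2.integrable_inner (𝕜 := 𝕜) (hf.toLp f) (hg.toLp g)).congr <| by
    filter_upwards [hf.coeFn_toLp, hg.coeFn_toLp] with x hfx hgx
    rw [hfx, hgx]

theorem MeasureTheory.Integrable.inner_prod {β : Type*} [MeasurableSpace β] {ν : Measure β}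
    [SFinite ν] {f : α → E} {g : β → E} (hf : Integrable f μ) (hg : Integrable g ν) :
    Integrable (fun p : α × β => ⟪f p.1, g p.2⟫) (μ.prod ν) :=
  hf.op_fst_snd (op := fun x y => ⟪x, y⟫) continuous_inner
    ⟨1, fun x y => by simpa using norm_inner_le_norm x y⟩ hg

variable [CompleteSpace E] [NormedSpace ℝ E]

theorem integral_inner_const {f : α → E} (hf : Integrable f μ) (c : E) :
    ∫ x, ⟪f x, c⟫ ∂μ = ⟪∫ x, f x ∂μ, c⟫ := by
  simp_rw [← inner_conj_symm _ c]
  rw [integral_conj, integral_inner hf]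

variable {a b : ℝ} {f g v w : ℝ → E}

theorem setIntegral_inner_eq_add_integral_lower_triangle (hf : IntegrableOn f (Ioc a b))
    (hg : IntegrableOn g (Ioc a b)) (hw : ∀ t ∈ Ioc a b, w t = w a + ∫ s in Ioc a t, g s) :
    ∫ t in Ioc a b, ⟪f t, w t⟫ = ⟪∫ t in Ioc a b, f t, w a⟫ +
      ∫ p in {p : ℝ × ℝ | p.2 ≤ p.1}, ⟪f p.1, g p.2⟫ ∂(volume.restrict (Ioc a b)).prod
        (volume.restrict (Ioc a b)) := by
  have hD : MeasurableSet {p : ℝ × ℝ | p.2 ≤ p.1} := measurableSet_le measurable_snd measurable_fst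
  have hk := (hf.inner_prod (𝕜 := 𝕜) hg).indicator hD
  rw [← integral_inner_const hf, ← integral_indicator hD, integral_prod _ hk,
    ← integral_add (hf.inner_const _) hk.integral_prod_left]
  refine setIntegral_congr_fun measurableSet_Ioc fun t ht => ?_
  rw [hw t ht, inner_add_right, setIntegral_Ioc_eq_integral_indicator_Iic ht.2,
    ← integral_inner (hg.indicator measurableSet_Iic)]
  congr 1
  refine integral_congr_ae (ae_of_all _ fun r => ?_)
  by_cases hrt : r ≤ t <;> simp [hrt]

theorem setIntegral_inner_eq_add_integral_upper_triangle (hf : IntegrableOn f (Ioc a b))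
    (hg : IntegrableOn g (Ioc a b)) (hv : ∀ t ∈ Ioc a b, v t = v a + ∫ s in Ioc a t, f s) :
    ∫ t in Ioc a b, ⟪v t, g t⟫ = ⟪v a, ∫ t in Ioc a b, g t⟫ +
      ∫ p in {p : ℝ × ℝ | p.2 ≤ p.1}ᶜ, ⟪f p.1, g p.2⟫ ∂(volume.restrict (Ioc a b)).prod
        (volume.restrict (Ioc a b)) := by
  have hD : MeasurableSet {p : ℝ × ℝ | p.2 ≤ p.1}ᶜ :=
    (measurableSet_le measurable_snd measurable_fst).compl
  have hk := (hf.inner_prod (𝕜 := 𝕜) hg).indicator hD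
  rw [← integral_inner hg, ← integral_indicator hD, integral_prod_symm _ hk,
    ← integral_add (hg.const_inner _) hk.integral_prod_right]
  refine setIntegral_congr_fun measurableSet_Ioc fun r hr => ?_
  rw [hv r hr, inner_add_left, setIntegral_Ioc_eq_integral_indicator_Iio hr.2,
    ← integral_inner_const (hf.indicator measurableSet_Iio)]
  congr 1
  refine integral_congr_ae (ae_of_all _ fun t => ?_)
  by_cases htr : t < r <;> simp [htr]

theorem integral_inner_add_integral_inner_eq_sub (hab : a ≤ b)
    (hf : IntegrableOn f (Ioc a b)) (hg : IntegrableOn g (Ioc a b))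
    (hv : ∀ t ∈ Icc a b, v t = v a + ∫ s in Ioc a t, f s)
    (hw : ∀ t ∈ Icc a b, w t = w a + ∫ s in Ioc a t, g s) :
    (∫ t in Ioc a b, ⟪f t, w t⟫) + ∫ t in Ioc a b, ⟪v t, g t⟫ = ⟪v b, w b⟫ - ⟪v a, w a⟫ := by
  have hfv : ∫ s in Ioc a b, f s = v b - v a := by
    rw [hv b (right_mem_Icc.2 hab), add_sub_cancel_left]
  have hgw : ∫ s in Ioc a b, g s = w b - w a := by
    rw [hw b (right_mem_Icc.2 hab), add_sub_cancel_left]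
  have h_square := integral_add_compl (measurableSet_le measurable_snd measurable_fst)
    (hf.inner_prod (𝕜 := 𝕜) hg)
  rw [integral_prod _ (hf.inner_prod hg)] at h_square
  simp_rw [integral_inner hg, integral_inner_const hf, hfv, hgw] at h_square
  rw [setIntegral_inner_eq_add_integral_lower_triangle hf hg
      fun t ht => hw t (Ioc_subset_Icc_self ht),
    setIntegral_inner_eq_add_integral_upper_triangle hf hg
      fun t ht => hv t (Ioc_subset_Icc_self ht), hfv, hgw]
  simp only [inner_sub_left, inner_sub_right] at h_square ⊢
  linear_combination h_square

theorem IsSelfAdjoint.two_mul_re_integral_inner_eq_sub {K : E →L[𝕜] E} (hK : IsSelfAdjoint K)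
    (hab : a ≤ b) (hf : IntegrableOn f (Ioc a b))
    (hv : ∀ t ∈ Icc a b, v t = v a + ∫ s in Ioc a t, f s) :
    2 * RCLike.re (∫ t in Ioc a b, ⟪f t, K (v t)⟫)
      = RCLike.re ⟪v b, K (v b)⟫ - RCLike.re ⟪v a, K (v a)⟫ := by
  have hKv : ∀ t ∈ Icc a b, K (v t) = K (v a) + ∫ s in Ioc a t, K (f s) := fun t ht => by
    rw [hv t ht, map_add, K.integral_comp_comm (hf.mono_set (Ioc_subset_Ioc_right ht.2))]
  have h := integral_inner_add_integral_inner_eq_sub (𝕜 := 𝕜) hab hf (K.integrable_comp hf) hv hKv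
  have hconj : ∀ t, ⟪v t, K (f t)⟫ = starRingEnd 𝕜 ⟪f t, K (v t)⟫ := fun t =>
    (hK.isSymmetric (v t) (f t)).symm.trans (inner_conj_symm _ _).symm
  simp_rw [hconj, integral_conj, RCLike.add_conj] at h
  simpa using congr_arg RCLike.re h

end InnerProduct
section Apow

variable {H : Type*} [NormedAddCommGroup H] [InnerProductSpace ℂ H] [CompleteSpace H]
  {A : H →L[ℂ] H}

theorem Apow_half_mul_self (hA : 0 ≤ A) (n : ℕ) :
    Apow A (n / 2) * Apow A (n / 2) = A ^ n := by
  have hcont : ContinuousOn (fun μ : ℝ => μ ^ ((n : ℝ) / 2)) (spectrum ℝ A) :=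
    (Real.continuous_rpow_const (by positivity)).continuousOn
  rw [Apow, ← cfc_mul _ _ A hcont hcont, ← cfc_pow_id (R := ℝ) A n]
  refine cfc_congr fun μ hμ => ?_
  have hμ₀ : 0 ≤ μ := spectrum_nonneg_of_nonneg hA hμ
  rw [← Real.rpow_add_of_nonneg hμ₀ (by positivity) (by positivity), add_halves,
    Real.rpow_natCast]

theorem re_inner_pow_apply_eq_norm_Apow_sq (hA : 0 ≤ A) (n : ℕ) (x : H) :
    (inner ℂ x ((A ^ n) x)).re = ‖Apow A (n / 2) x‖ ^ 2 := by
  have hB : IsSelfAdjoint (Apow A (n / 2)) := cfc_predicate _ A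
  rw [← Apow_half_mul_self hA n, ← inner_self_eq_norm_sq (𝕜 := ℂ)]
  exact congr_arg Complex.re (hB.isSymmetric x (Apow A (n / 2) x)).symm

end Apow

section Admissible

variable {H : Type*} [NormedAddCommGroup H] [InnerProductSpace ℂ H] [CompleteSpace H]
  {u u' u'' u''' : ℝ → H} {K : H →L[ℂ] H}

local notation "⟪" x ", " y "⟫" => inner ℂ x y

theorem Admissible.setIntegral_Ioc_re_inner_eq_sub (hu : Admissible u u' u'' u''')
    (hK : IsSelfAdjoint K) {T : ℝ} (hT : 0 ≤ T) :
    ∫ t in Ioc 0 T, ⟪u''' t, K (u t)⟫.re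
      = (⟪u'' T, K (u T)⟫.re - ⟪u' T, K (u' T)⟫.re / 2)
        - (⟪u'' 0, K (u 0)⟫.re - ⟪u' 0, K (u' 0)⟫.re / 2) := by
  have hu'_cont : ContinuousOn u' (Ici 0) := fun t ht => (hu.hasDeriv2 t ht).continuousWithinAt
  have hu'_int : IntegrableOn u' (Ioc 0 T) :=
    (hu'_cont.mono Icc_subset_Ici_self).integrableOn_Icc.mono_set Ioc_subset_Icc_self
  have hu''_int : IntegrableOn u'' (Ioc 0 T) :=
    (hu.cont2.mono Icc_subset_Ici_self).integrableOn_Icc.mono_set Ioc_subset_Icc_self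
  have hu'''_int : IntegrableOn u''' (Ioc 0 T) :=
    (hu.locInt3.integrableOn_compact_subset Icc_subset_Ici_self isCompact_Icc).mono_set
      Ioc_subset_Icc_self
  have hKu : ∀ t ∈ Icc 0 T, K (u t) = K (u 0) + ∫ s in Ioc 0 t, K (u' s) := fun t ht => by
    rw [eq_add_setIntegral_Ioc_of_hasDerivWithinAt_Ici hu.hasDeriv1 hu'_cont ht.1, map_add,
      K.integral_comp_comm (hu'_int.mono_set (Ioc_subset_Ioc_right ht.2))]
  have h_parts := integral_inner_add_integral_inner_eq_sub (𝕜 := ℂ) hT hu'''_int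
    (K.integrable_comp hu'_int) (fun t ht => hu.fund t ht.1) hKu
  have h_energy := hK.two_mul_re_integral_inner_eq_sub hT hu''_int
    fun t ht => eq_add_setIntegral_Ioc_of_hasDerivWithinAt_Ici hu.hasDeriv2 hu.cont2 ht.1
  have hφ : IntegrableOn (fun t => ⟪u''' t, K (u t)⟫) (Ioi 0) :=
    hu.sq3.integrable_inner (𝕜 := ℂ) (K.comp_memLp' hu.sq0)
  have h_re : ∫ t in Ioc 0 T, ⟪u''' t, K (u t)⟫.re = (∫ t in Ioc 0 T, ⟪u''' t, K (u t)⟫).re :=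
    integral_re (hφ.mono_set Ioc_subset_Ioi_self)
  have h_parts_re := congr_arg Complex.re h_parts
  simp only [Complex.add_re, Complex.sub_re] at h_parts_re
  simp only [RCLike.re_to_complex] at h_energy
  rw [h_re]
  linarith

theorem Admissible.two_mul_re_integral_Ioi_inner_eq (hu : Admissible u u' u'' u''')
    (hK : IsSelfAdjoint K) (h0 : u 0 = 0) :
    2 * (∫ t in Ioi 0, ⟪u''' t, K (u t)⟫).re = ⟪u' 0, K (u' 0)⟫.re := by
  have hφ : IntegrableOn (fun t => ⟪u''' t, K (u t)⟫) (Ioi 0) :=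
    hu.sq3.integrable_inner (𝕜 := ℂ) (K.comp_memLp' hu.sq0)
  have hG : IntegrableOn (fun t => ⟪u'' t, K (u t)⟫.re - ⟪u' t, K (u' t)⟫.re / 2) (Ioi 0) :=
    (hu.sq2.integrable_inner (𝕜 := ℂ) (K.comp_memLp' hu.sq0)).re.sub
      ((hu.sq1.integrable_inner (𝕜 := ℂ) (K.comp_memLp' hu.sq1)).re.div_const 2)
  rw [← RCLike.re_to_complex, ← integral_re hφ,
    integral_Ioi_eq_neg_of_integral_Ioc_eq_sub hφ.re hG
      fun T hT => hu.setIntegral_Ioc_re_inner_eq_sub hK hT.le,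
    h0, map_zero, inner_zero_right, Complex.zero_re]
  ring

end Admissible

/-- If `u` is admissible and `u(0) = 0`, then
`2 Re ∫₀^∞ ⟨u'''(t), A³u(t)⟩ dt = ‖A^{3/2} u'(0)‖²`. -/
theorem stmt_6 {H : Type*} [NormedAddCommGroup H] [InnerProductSpace ℂ H] [CompleteSpace H]
    (A : H →L[ℂ] H) (hA : IsSelfAdjoint A) (μ₀ : ℝ) (hμ₀ : 0 < μ₀)
    (hpos : ∀ x : H, μ₀ * ‖x‖ ^ 2 ≤ (inner ℂ (A x) x : ℂ).re)
    (u u' u'' u''' : ℝ → H) (hu : Admissible u u' u'' u''')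
    (h0 : u 0 = 0) :
    2 * (∫ t in Ioi (0 : ℝ), (inner ℂ (u''' t) ((A ^ 3) (u t)) : ℂ)).re
      = ‖Apow A (3 / 2) (u' 0)‖ ^ 2 := by
  have hA₀ : 0 ≤ A := (ContinuousLinearMap.nonneg_iff_isPositive A).2
    ⟨hA.isSymmetric, fun x => (by positivity : 0 ≤ μ₀ * ‖x‖ ^ 2).trans (hpos x)⟩
  rw [hu.two_mul_re_integral_Ioi_inner_eq (hA.pow 3) h0,
    re_inner_pow_apply_eq_norm_Apow_sq hA₀ 3]
  norm_num
end

section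
/- If u is admissible and u(0) = 0, then ‖A²u'‖²_{L²} ≤ ‖A³u‖_{L²} · ‖Au''‖_{L²}. -/
open MeasureTheory Set

/-! With `f = Re ⟪A³u, Au'⟫`, self-adjointness of `A` gives
`f' = ‖A²u'‖² + Re ⟪A³u, Au''⟫`. Since `u, u', u''` are square-integrable, `f` and `f'` are
integrable on `(0, ∞)`, so `f` tends to `0` at infinity; as `f 0 = 0`, integrating `f'` yields
`‖A²u'‖²_{L²} = -∫ Re ⟪A³u, Au''⟫`, which Cauchy–Schwarz bounds by `‖A³u‖_{L²} ‖Au''‖_{L²}`. -/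

open Filter Topology

section L2Products

variable {α E : Type*} [MeasurableSpace α] {μ : Measure α} [NormedAddCommGroup E] {F G : α → E}

lemma integrable_norm_mul_norm_of_memLp_two (hF : MemLp F 2 μ) (hG : MemLp G 2 μ) :
    Integrable (fun t => ‖F t‖ * ‖G t‖) μ :=
  hF.norm.integrable_mul hG.norm

lemma integral_norm_mul_norm_le_of_memLp_two (hF : MemLp F 2 μ) (hG : MemLp G 2 μ) :
    ∫ t, ‖F t‖ * ‖G t‖ ∂μ ≤ √(∫ t, ‖F t‖ ^ 2 ∂μ) * √(∫ t, ‖G t‖ ^ 2 ∂μ) := by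
  have h2 : ENNReal.ofReal 2 = 2 := ENNReal.ofReal_ofNat 2
  have := integral_mul_norm_le_Lp_mul_Lq Real.HolderConjugate.two_two (h2 ▸ hF) (h2 ▸ hG)
  simpa only [Real.rpow_two, Real.sqrt_eq_rpow] using this

end L2Products

section InnerProducts

variable {α 𝕜 E : Type*} [MeasurableSpace α] {μ : Measure α} [RCLike 𝕜]
  [NormedAddCommGroup E] [InnerProductSpace 𝕜 E] {F G : α → E}

lemma abs_re_inner_le_norm_mul_norm (x y : E) : |RCLike.re (inner 𝕜 x y)| ≤ ‖x‖ * ‖y‖ :=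
  (RCLike.abs_re_le_norm _).trans (norm_inner_le_norm x y)

lemma integrable_re_inner_of_memLp_two (hF : MemLp F 2 μ) (hG : MemLp G 2 μ) :
    Integrable (fun t => RCLike.re (inner 𝕜 (F t) (G t))) μ :=
  (integrable_norm_mul_norm_of_memLp_two hF hG).mono'
    (RCLike.continuous_re.comp_aestronglyMeasurable (hF.1.inner hG.1))
    (Eventually.of_forall fun t => abs_re_inner_le_norm_mul_norm (F t) (G t))

lemma abs_integral_re_inner_le_of_memLp_two (hF : MemLp F 2 μ) (hG : MemLp G 2 μ) :
    |∫ t, RCLike.re (inner 𝕜 (F t) (G t)) ∂μ|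
      ≤ √(∫ t, ‖F t‖ ^ 2 ∂μ) * √(∫ t, ‖G t‖ ^ 2 ∂μ) :=
  calc |∫ t, RCLike.re (inner 𝕜 (F t) (G t)) ∂μ|
      ≤ ∫ t, |RCLike.re (inner 𝕜 (F t) (G t))| ∂μ := abs_integral_le_integral_abs
    _ ≤ ∫ t, ‖F t‖ * ‖G t‖ ∂μ :=
        integral_mono (integrable_re_inner_of_memLp_two hF hG).abs
          (integrable_norm_mul_norm_of_memLp_two hF hG)
          fun t => abs_re_inner_le_norm_mul_norm (F t) (G t)
    _ ≤ _ := integral_norm_mul_norm_le_of_memLp_two hF hG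

lemma IsSelfAdjoint.inner_pow_three_apply_apply [CompleteSpace E] {A : E →L[𝕜] E}
    (hA : IsSelfAdjoint A) (y : E) :
    inner 𝕜 ((A ^ 3) y) (A y) = (‖(A ^ 2) y‖ ^ 2 : ℝ) :=
  calc inner 𝕜 ((A ^ 3) y) (A y) = inner 𝕜 ((A ^ 2) y) (A (A y)) :=
        hA.isSymmetric ((A ^ 2) y) (A y)
    _ = (‖(A ^ 2) y‖ ^ 2 : ℝ) := by
        rw [RCLike.ofReal_pow, ← inner_self_eq_norm_sq_to_K]
        rfl

end InnerProducts

lemma IsSelfAdjoint.hasDerivWithinAt_re_inner_pow_three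
    {H : Type*} [NormedAddCommGroup H] [InnerProductSpace ℂ H] [CompleteSpace H]
    {A : H →L[ℂ] H} (hA : IsSelfAdjoint A) {u u' u'' : ℝ → H} {s : Set ℝ} {t : ℝ}
    (hu : HasDerivWithinAt u (u' t) s t) (hu' : HasDerivWithinAt u' (u'' t) s t) :
    HasDerivWithinAt (fun τ => (inner ℂ ((A ^ 3) (u τ)) (A (u' τ))).re)
      (‖(A ^ 2) (u' t)‖ ^ 2 + (inner ℂ ((A ^ 3) (u t)) (A (u'' t))).re) s t := by
  have hA3u := ((A ^ 3).restrictScalars ℝ).hasFDerivAt.comp_hasDerivWithinAt t hu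
  have hAu' := (A.restrictScalars ℝ).hasFDerivAt.comp_hasDerivWithinAt t hu'
  refine (Complex.reCLM.hasFDerivAt.comp_hasDerivWithinAt t (hA3u.inner ℂ hAu')).congr_deriv ?_
  simp only [Function.comp_apply, ContinuousLinearMap.coe_restrictScalars', Complex.reCLM_apply,
      Complex.add_re, hA.inner_pow_three_apply_apply]
  rw [add_comm]
  rfl

theorem stmt_11_general {H : Type*} [NormedAddCommGroup H] [InnerProductSpace ℂ H] [CompleteSpace H]
    (A : H →L[ℂ] H) (hA : IsSelfAdjoint A)
    (u u' u'' u''' : ℝ → H) (hu : Admissible u u' u'' u''')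
    (h0 : u 0 = 0) :
    L2norm (fun t => (A ^ 2) (u' t)) ^ 2
      ≤ L2norm (fun t => (A ^ 3) (u t)) * L2norm (fun t => A (u'' t)) := by
  set f : ℝ → ℝ := fun t => (inner ℂ ((A ^ 3) (u t)) (A (u' t))).re
  set q : ℝ → ℝ := fun t => ‖(A ^ 2) (u' t)‖ ^ 2
  set r : ℝ → ℝ := fun t => (inner ℂ ((A ^ 3) (u t)) (A (u'' t))).re
  have hA3u := (A ^ 3).comp_memLp' hu.sq0
  have hA2u' := (A ^ 2).comp_memLp' hu.sq1
  have hAu' := A.comp_memLp' hu.sq1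
  have hAu'' := A.comp_memLp' hu.sq2
  have hq : IntegrableOn q (Ioi 0) := hA2u'.integrable_norm_pow two_ne_zero
  have hr : IntegrableOn r (Ioi 0) := integrable_re_inner_of_memLp_two (𝕜 := ℂ) hA3u hAu''
  have hf_deriv : ∀ t ∈ Ici (0 : ℝ), HasDerivWithinAt f (q t + r t) (Ici 0) t := fun t ht =>
    hA.hasDerivWithinAt_re_inner_pow_three (hu.hasDeriv1 t ht) (hu.hasDeriv2 t ht)
  have hf_deriv' : ∀ t ∈ Ioi (0 : ℝ), HasDerivAt f (q t + r t) t := fun t ht =>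
    (hf_deriv t (mem_Ici.2 (le_of_lt ht))).hasDerivAt (Ici_mem_nhds ht)
  have hf_lim : Tendsto f atTop (𝓝 0) :=
    tendsto_zero_of_hasDerivAt_of_integrableOn_Ioi hf_deriv' (hq.add hr)
      (integrable_re_inner_of_memLp_two (𝕜 := ℂ) hA3u hAu')
  have hFTC : ∫ t in Ioi 0, (q t + r t) = 0 := by
    simpa [f, h0] using integral_Ioi_of_hasDerivAt_of_tendsto
      (hf_deriv 0 self_mem_Ici).continuousWithinAt hf_deriv' (hq.add hr) hf_lim
  rw [integral_add hq hr] at hFTC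
  calc L2norm (fun t => (A ^ 2) (u' t)) ^ 2 = ∫ t in Ioi 0, q t :=
        Real.sq_sqrt (integral_nonneg fun t => by positivity)
    _ = -∫ t in Ioi 0, r t := by linarith
    _ ≤ |∫ t in Ioi 0, r t| := neg_le_abs _
    _ ≤ _ := abs_integral_re_inner_le_of_memLp_two (𝕜 := ℂ) hA3u hAu''

/-- If `u` is admissible and `u(0) = 0`, then `‖A²u'‖²_{L²} ≤ ‖A³u‖_{L²} ‖Au''‖_{L²}`. -/
theorem stmt_11 {H : Type*} [NormedAddCommGroup H] [InnerProductSpace ℂ H] [CompleteSpace H]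
    (A : H →L[ℂ] H) (hA : IsSelfAdjoint A) (μ₀ : ℝ) (hμ₀ : 0 < μ₀)
    (hpos : ∀ x : H, μ₀ * ‖x‖ ^ 2 ≤ (inner ℂ (A x) x : ℂ).re)
    (u u' u'' u''' : ℝ → H) (hu : Admissible u u' u'' u''')
    (h0 : u 0 = 0) :
    L2norm (fun t => (A ^ 2) (u' t)) ^ 2
      ≤ L2norm (fun t => (A ^ 3) (u t)) * L2norm (fun t => A (u'' t)) :=
  stmt_11_general A hA u u' u'' u''' hu h0
end
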